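/- arXiv:1701.07564 — 2 statements merged into one kernel-verified Lean document; each statement's English description precedes it below -/
import Mathlib

section
/- Let k be a field, m ≥ 1, and let A = k⟨a,b⟩/(a², b², (ab)^m − (ba)^m, (ab)^m a, (ba)^m b). Then A is a symmetric k-algebra: there exists a k-linear map λ : A → k whose associated bilinear form (x,y) ↦ λ(xy) is nondegenerate and symmetric. -/
/-!
On the free algebra, let `λ` be the sum of the coefficients of the two socle words `(ab)^m` and
`(ba)^m`. This pair of words is closed under cyclic rotation, so `λ (x * y) = λ (y * x)`. By that
symmetry, a relation `x ~ y` only has to be tested in the form `λ (x * w) = λ (y * w)` for words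
`w`, which is a matter of counting letters; hence `λ` descends to `A`.

In `A`, every word is zero or an alternating word, and alternating words longer than `2m` vanish,
so `A` is spanned by the alternating words of length at most `2m` (identifying `(ab)^m` with
`(ba)^m`). The alternating word of length `l` starting with `s` is paired by `λ` with the
alternating word of length `2m - l` that completes it to a socle word, and with no other spanning
word; so `λ (x * y) = 0` for all `y` forces every coefficient of `x` to vanish.
-/

open FreeAlgebra

/-- Relations of the torus-loop algebra `k⟨a,b⟩/(a², b², (ab)^m − (ba)^m, (ab)^m a, (ba)^m b)`,
where `a = ι k 0` and `b = ι k 1`. -/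
inductive TorusRel (k : Type*) [Field k] (m : ℕ) :
    FreeAlgebra k (Fin 2) → FreeAlgebra k (Fin 2) → Prop
  | asq : TorusRel k m (ι k 0 * ι k 0) 0
  | bsq : TorusRel k m (ι k 1 * ι k 1) 0
  | comm : TorusRel k m ((ι k 0 * ι k 1) ^ m) ((ι k 1 * ι k 0) ^ m)
  | soca : TorusRel k m ((ι k 0 * ι k 1) ^ m * ι k 0) 0
  | socb : TorusRel k m ((ι k 1 * ι k 0) ^ m * ι k 1) 0

namespace RingQuot

variable {S A M : Type*} [CommSemiring S] [Semiring A] [Algebra S A] [AddCommMonoid M]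
  [Module S M] {r : A → A → Prop}

theorem Rel.map_mul_mul_eq (f : A →ₗ[S] M)
    (hf : ∀ ⦃x y⦄, r x y → ∀ a b, f (a * x * b) = f (a * y * b)) {x y : A} (h : Rel r x y)
    (a b : A) : f (a * x * b) = f (a * y * b) := by
  induction h generalizing a b with
  | of hxy => exact hf hxy a b
  | add_left _ ih => simp only [mul_add, add_mul, map_add, ih]
  | mul_left _ ih => simpa only [mul_assoc] using ih a _
  | mul_right _ ih => simpa only [mul_assoc] using ih (a * _) b

noncomputable def liftLinearMap (f : A →ₗ[S] M)
    (hf : ∀ ⦃x y⦄, r x y → ∀ a b, f (a * x * b) = f (a * y * b)) : RingQuot r →ₗ[S] M where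
  toFun q := Quot.lift f (fun x y h => by simpa using h.map_mul_mul_eq f hf 1 1) q.toQuot
  map_add' := by
    rintro ⟨⟨x⟩⟩ ⟨⟨y⟩⟩
    exact map_add f x y
  map_smul' := by
    rintro c ⟨⟨x⟩⟩
    exact map_smul f c x

theorem liftLinearMap_mkAlgHom (f : A →ₗ[S] M)
    (hf : ∀ ⦃x y⦄, r x y → ∀ a b, f (a * x * b) = f (a * y * b)) (x : A) :
    liftLinearMap f hf (mkAlgHom S r x) = f x := by
  simp [liftLinearMap, mkAlgHom_def, mkRingHom_def]

end RingQuot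

theorem LinearMap.eq_zero_of_forall_mul_eq_zero_of_dual {R A ι : Type*} [CommSemiring R]
    [Semiring A] [Algebra R A] [DecidableEq ι] (l : A →ₗ[R] R) (s : Finset ι) (e f : ι → A)
    (hspan : Submodule.span R (e '' s) = ⊤)
    (hdual : ∀ i ∈ s, ∀ j ∈ s, l (e i * f j) = if i = j then 1 else 0)
    {x : A} (hx : ∀ y, l (x * y) = 0) : x = 0 := by
  have hxs : x ∈ Submodule.span R (e '' s) := hspan ▸ Submodule.mem_top
  obtain ⟨c, rfl⟩ := (Submodule.mem_span_image_finset_iff_exists_fun' R).mp hxs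
  have hc : ∀ j ∈ s, c j = 0 := fun j hj => by
    have hxj := hx (f j)
    simp only [Finset.sum_mul, smul_mul_assoc, map_sum, map_smul, smul_eq_mul] at hxj
    rwa [Finset.sum_congr rfl fun i hi => by rw [hdual i hi j hj, mul_ite, mul_one, mul_zero],
      Finset.sum_ite_eq', if_pos hj] at hxj
  exact Finset.sum_eq_zero fun i hi => by rw [hc i hi, zero_smul]

namespace FreeAlgebra

variable {R X : Type*} [CommSemiring R]

theorem basisFreeMonoid_apply (w : FreeMonoid X) :
    basisFreeMonoid R X w = FreeMonoid.lift (ι R) w := by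
  simp [basisFreeMonoid, equivMonoidAlgebraFreeMonoid]

noncomputable def coordSum (S : Finset (FreeMonoid X)) : FreeAlgebra R X →ₗ[R] R :=
  ∑ w ∈ S, (basisFreeMonoid R X).coord w

open Classical in
theorem coordSum_basisFreeMonoid (S : Finset (FreeMonoid X)) (w : FreeMonoid X) :
    coordSum S (basisFreeMonoid R X w) = if w ∈ S then 1 else 0 := by
  simp [coordSum, Finsupp.single_apply]

theorem coordSum_mul_comm {S : Finset (FreeMonoid X)} (hS : ∀ u v, u * v ∈ S → v * u ∈ S)
    (x y : FreeAlgebra R X) : coordSum S (x * y) = coordSum S (y * x) := by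
  classical
  have hb : ∀ u v, basisFreeMonoid R X u * basisFreeMonoid R X v = basisFreeMonoid R X (u * v) :=
    by simp [basisFreeMonoid_apply]
  suffices (LinearMap.mul R _).compr₂ (coordSum S) = (LinearMap.mul R _).flip.compr₂ (coordSum S)
    from LinearMap.congr_fun₂ this x y
  refine LinearMap.ext_basis (basisFreeMonoid R X) (basisFreeMonoid R X) fun u v => ?_
  simp only [LinearMap.compr₂_apply, LinearMap.mul_apply', LinearMap.flip_apply, hb,
    coordSum_basisFreeMonoid]
  exact if_congr ⟨hS u v, hS v u⟩ rfl rfl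

end FreeAlgebra

namespace TorusAlgebra

open Fin.NatCast

def altWord (n : ℕ) (s : Fin 2) : List (Fin 2) :=
  (List.range n).map fun i : ℕ => s + (i : Fin 2)

@[simp] theorem length_altWord (n : ℕ) (s : Fin 2) : (altWord n s).length = n := by
  simp [altWord]

@[simp] theorem altWord_zero (s : Fin 2) : altWord 0 s = [] := rfl

theorem altWord_add (p q : ℕ) (s : Fin 2) :
    altWord (p + q) s = altWord p s ++ altWord q (s + p) := by
  simp [altWord, List.range_add, Function.comp_def, add_assoc]

theorem altWord_succ (n : ℕ) (s : Fin 2) : altWord (n + 1) s = s :: altWord n (s + 1) := by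
  rw [add_comm, altWord_add]
  simp [altWord]

theorem natCast_two_mul (m : ℕ) : ((2 * m : ℕ) : Fin 2) = 0 := by
  simp [Fin.natCast_eq_zero]

theorem altWord_two_mul_add (m q : ℕ) (s : Fin 2) :
    altWord (2 * m + q) s = altWord (2 * m) s ++ altWord q s := by
  rw [altWord_add, natCast_two_mul, add_zero]

theorem altWord_inj {n : ℕ} (hn : n ≠ 0) {s t : Fin 2} : altWord n s = altWord n t ↔ s = t := by
  obtain ⟨n, rfl⟩ := Nat.exists_eq_succ_of_ne_zero hn
  exact ⟨fun h => (List.cons.inj (by simpa only [altWord_succ] using h)).1, congrArg _⟩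

theorem append_eq_altWord {u v : List (Fin 2)} {n : ℕ} {s : Fin 2} (h : u ++ v = altWord n s) :
    u = altWord u.length s ∧ v = altWord v.length (s + u.length) := by
  have hn : n = u.length + v.length := by simpa using (congrArg List.length h).symm
  rw [hn, altWord_add] at h
  exact List.append_inj h (length_altWord _ _).symm

theorem cons_cons_ne_altWord (a : Fin 2) (w : List (Fin 2)) (n : ℕ) (s : Fin 2) :
    a :: a :: w ≠ altWord n s := by
  intro h
  rcases n with _ | _ | n <;> simp [altWord_succ] at h
  obtain ⟨rfl, h, -⟩ := h
  exact (by decide : ∀ a : Fin 2, a ≠ a + 1) _ h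

theorem eq_altWord_or_exists_eq_append_cons_cons (w : List (Fin 2)) :
    (∃ s, w = altWord w.length s) ∨ ∃ u a v, w = u ++ a :: a :: v := by
  induction w with
  | nil => exact .inl ⟨0, rfl⟩
  | cons x t ih =>
    rcases ih with ⟨s, hs⟩ | ⟨u, a, v, rfl⟩
    · rcases t with _ | ⟨y, t⟩
      · exact .inl ⟨x, by simp [altWord_succ]⟩
      have hys : y = s := by
        rw [List.length_cons, altWord_succ] at hs
        exact (List.cons.inj hs).1
      subst hys
      by_cases hxy : x = y
      · exact .inr ⟨[], x, t, by rw [hxy]; rfl⟩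
      · have hy : y = x + 1 := (by decide : ∀ a b : Fin 2, a ≠ b → b = a + 1) x y hxy
        exact .inl ⟨x, by rw [List.length_cons, altWord_succ, ← hy, ← hs]⟩
    · exact .inr ⟨x :: u, a, v, rfl⟩

theorem altWord_rotate {u v : List (Fin 2)} {m : ℕ} {s : Fin 2}
    (h : u ++ v = altWord (2 * m) s) : v ++ u = altWord (2 * m) (s + u.length) := by
  obtain ⟨hu, hv⟩ := append_eq_altWord h
  have hlen : v.length + u.length = 2 * m := by simpa [add_comm] using congrArg List.length h
  rw [← hlen, altWord_add, add_assoc, ← Nat.cast_add, add_comm u.length, hlen, natCast_two_mul,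
    add_zero, ← hu, ← hv]

theorem exists_altWord_eq_altWord_append (m : ℕ) (s : Fin 2) (w : List (Fin 2)) :
    (∃ t, altWord (2 * m) t = altWord (2 * m) s ++ w) ↔ w = [] := by
  constructor
  · rintro ⟨t, h⟩
    simpa using congrArg List.length h
  · rintro rfl
    exact ⟨s, by simp⟩

/-- `(l, s)` stands for the alternating word of length `l` starting with `s`; the letter `s` is
normalised to `0` for the empty word and for `(ab)^m`, which equals `(ba)^m` in the quotient. -/
def basisIndex (m : ℕ) : Finset (ℕ × Fin 2) :=
  (Finset.range (2 * m + 1) ×ˢ Finset.univ).filter fun p => p.1 = 0 ∨ p.1 = 2 * m → p.2 = 0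

theorem exists_altWord_eq_append_iff {m : ℕ} {p q : ℕ × Fin 2} (hp : p ∈ basisIndex m)
    (hq : q ∈ basisIndex m) :
    (∃ t, altWord (2 * m) t = altWord p.1 p.2 ++ altWord (2 * m - q.1) (q.2 + q.1)) ↔ p = q := by
  obtain ⟨l, s⟩ := p
  obtain ⟨l', s'⟩ := q
  simp only [basisIndex, Finset.mem_filter, Finset.mem_product, Finset.mem_range,
    Finset.mem_univ, and_true] at hp hq
  constructor
  · rintro ⟨t, h⟩
    have hll' : l = l' := by
      have := congrArg List.length h
      simp only [List.length_append, length_altWord] at this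
      omega
    subst hll'
    obtain ⟨hu, hv⟩ := append_eq_altWord h.symm
    simp only [length_altWord] at hu hv
    rw [Prod.mk.injEq, eq_self, true_and]
    by_cases hl : l = 0 ∨ l = 2 * m
    · rw [hp.2 hl, hq.2 hl]
    · rw [altWord_inj (by omega)] at hu hv
      rw [hu, add_right_cancel hv]
  · rintro ⟨⟩
    refine ⟨s, ?_⟩
    rw [← altWord_add, Nat.add_sub_cancel' (by omega)]

section Words

variable (R : Type*) [CommSemiring R]

noncomputable def word (w : List (Fin 2)) : FreeAlgebra R (Fin 2) :=
  basisFreeMonoid R (Fin 2) (FreeMonoid.ofList w)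

theorem word_append (u v : List (Fin 2)) : word R (u ++ v) = word R u * word R v := by
  simp [word, basisFreeMonoid_apply]

theorem word_cons (a : Fin 2) (w : List (Fin 2)) : word R (a :: w) = ι R a * word R w := by
  simp [word, basisFreeMonoid_apply]

theorem word_nil : word R [] = 1 := by
  simp [word, basisFreeMonoid_apply]

theorem word_altWord_two_mul (j : ℕ) (s : Fin 2) :
    word R (altWord (2 * j) s) = (ι R s * ι R (s + 1)) ^ j := by
  induction j with
  | zero => exact word_nil R
  | succ j ih =>
    rw [mul_add, altWord_two_mul_add, word_append, ih, pow_succ, mul_one, altWord_succ,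
      altWord_succ, word_cons, word_cons, altWord_zero, word_nil, mul_one]

end Words

variable (k : Type*) [Field k] (m : ℕ)

def topWords : Finset (FreeMonoid (Fin 2)) :=
  (Finset.univ.image (altWord (2 * m))).map FreeMonoid.ofList.toEmbedding

noncomputable def topCoeff : FreeAlgebra k (Fin 2) →ₗ[k] k :=
  coordSum (topWords m)

theorem topCoeff_word (w : List (Fin 2)) :
    topCoeff k m (word k w) = if ∃ s, altWord (2 * m) s = w then 1 else 0 := by
  simp [topCoeff, word, coordSum_basisFreeMonoid, topWords]

theorem topCoeff_mul_comm (x y : FreeAlgebra k (Fin 2)) :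
    topCoeff k m (x * y) = topCoeff k m (y * x) := by
  refine coordSum_mul_comm (fun u v huv => ?_) x y
  simp only [topWords, Finset.mem_map_equiv, Finset.mem_image, Finset.mem_univ, true_and] at huv ⊢
  obtain ⟨s, h⟩ := huv
  exact ⟨_, (altWord_rotate h.symm).symm⟩

theorem topCoeff_word_eq_zero_of_length_ne {w : List (Fin 2)} (hw : w.length ≠ 2 * m) :
    topCoeff k m (word k w) = 0 := by
  rw [topCoeff_word, if_neg]
  rintro ⟨s, rfl⟩
  exact hw (length_altWord _ _)

theorem topCoeff_rel_mul_word {x y : FreeAlgebra k (Fin 2)} (h : TorusRel k m x y)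
    (w : List (Fin 2)) : topCoeff k m (x * word k w) = topCoeff k m (y * word k w) := by
  have h0 : (ι k 0 * ι k 1) ^ m = word k (altWord (2 * m) 0) := by
    simpa using (word_altWord_two_mul k m 0).symm
  have h1 : (ι k 1 * ι k 0) ^ m = word k (altWord (2 * m) 1) := by
    simpa using (word_altWord_two_mul k m 1).symm
  cases h with
  | asq | bsq =>
    rw [zero_mul, map_zero, mul_assoc, ← word_cons, ← word_cons, topCoeff_word, if_neg]
    rintro ⟨s, hs⟩
    exact cons_cons_ne_altWord _ _ _ _ hs.symm
  | comm =>
    rw [h0, h1, ← word_append, ← word_append, topCoeff_word, topCoeff_word]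
    simp only [exists_altWord_eq_altWord_append]
  | soca | socb =>
    rw [zero_mul, map_zero]
    simp only [h0, h1, mul_assoc, ← word_cons, ← word_append]
    exact topCoeff_word_eq_zero_of_length_ne k m (by simp)

theorem topCoeff_mul_mul_eq_of_rel {x y : FreeAlgebra k (Fin 2)} (h : TorusRel k m x y)
    (a b : FreeAlgebra k (Fin 2)) : topCoeff k m (a * x * b) = topCoeff k m (a * y * b) := by
  have hright : (topCoeff k m).comp (LinearMap.mulLeft k x) =
      (topCoeff k m).comp (LinearMap.mulLeft k y) :=
    (basisFreeMonoid k (Fin 2)).ext fun w => topCoeff_rel_mul_word k m h w.toList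
  calc topCoeff k m (a * x * b) = topCoeff k m (x * (b * a)) := by
        rw [mul_assoc, topCoeff_mul_comm, mul_assoc]
    _ = topCoeff k m (y * (b * a)) := LinearMap.congr_fun hright _
    _ = topCoeff k m (a * y * b) := by rw [mul_assoc, topCoeff_mul_comm k m a, mul_assoc]

noncomputable def torusTrace : RingQuot (TorusRel k m) →ₗ[k] k :=
  RingQuot.liftLinearMap (topCoeff k m) fun _ _ h => topCoeff_mul_mul_eq_of_rel k m h

theorem torusTrace_mkAlgHom (x : FreeAlgebra k (Fin 2)) :
    torusTrace k m (RingQuot.mkAlgHom k (TorusRel k m) x) = topCoeff k m x :=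
  RingQuot.liftLinearMap_mkAlgHom _ _ x

theorem torusTrace_mul_comm (x y : RingQuot (TorusRel k m)) :
    torusTrace k m (x * y) = torusTrace k m (y * x) := by
  obtain ⟨a, rfl⟩ := RingQuot.mkAlgHom_surjective k (TorusRel k m) x
  obtain ⟨b, rfl⟩ := RingQuot.mkAlgHom_surjective k (TorusRel k m) y
  rw [← map_mul, ← map_mul, torusTrace_mkAlgHom, torusTrace_mkAlgHom, topCoeff_mul_comm]

theorem mkAlgHom_word_append_cons_cons (u v : List (Fin 2)) (a : Fin 2) :
    RingQuot.mkAlgHom k (TorusRel k m) (word k (u ++ a :: a :: v)) = 0 := by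
  have hsq : RingQuot.mkAlgHom k (TorusRel k m) (ι k a * ι k a) = 0 := by
    fin_cases a
    exacts [(RingQuot.mkAlgHom_rel k TorusRel.asq).trans (map_zero _),
      (RingQuot.mkAlgHom_rel k TorusRel.bsq).trans (map_zero _)]
  rw [word_append, word_cons, word_cons, ← mul_assoc (ι k a), map_mul, map_mul, hsq, zero_mul,
    mul_zero]

theorem mkAlgHom_word_altWord_of_lt {n : ℕ} (hn : 2 * m < n) (s : Fin 2) :
    RingQuot.mkAlgHom k (TorusRel k m) (word k (altWord n s)) = 0 := by
  have hsoc : RingQuot.mkAlgHom k (TorusRel k m) ((ι k s * ι k (s + 1)) ^ m * ι k s) = 0 := by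
    fin_cases s
    exacts [(RingQuot.mkAlgHom_rel k TorusRel.soca).trans (map_zero _),
      (RingQuot.mkAlgHom_rel k TorusRel.socb).trans (map_zero _)]
  obtain ⟨q, rfl⟩ := Nat.exists_eq_add_of_lt hn
  rw [add_assoc, altWord_two_mul_add, altWord_succ, word_append, word_cons, word_altWord_two_mul,
    ← mul_assoc, map_mul, hsoc, zero_mul]

theorem mkAlgHom_word_altWord_one :
    RingQuot.mkAlgHom k (TorusRel k m) (word k (altWord (2 * m) 1)) =
      RingQuot.mkAlgHom k (TorusRel k m) (word k (altWord (2 * m) 0)) := by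
  rw [word_altWord_two_mul, word_altWord_two_mul]
  exact (RingQuot.mkAlgHom_rel k TorusRel.comm).symm

noncomputable def basisElem (p : ℕ × Fin 2) : RingQuot (TorusRel k m) :=
  RingQuot.mkAlgHom k (TorusRel k m) (word k (altWord p.1 p.2))

noncomputable def dualElem (p : ℕ × Fin 2) : RingQuot (TorusRel k m) :=
  RingQuot.mkAlgHom k (TorusRel k m) (word k (altWord (2 * m - p.1) (p.2 + p.1)))

theorem mkAlgHom_word_altWord_mem_span (n : ℕ) (s : Fin 2) :
    RingQuot.mkAlgHom k (TorusRel k m) (word k (altWord n s)) ∈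
      Submodule.span k (basisElem k m '' basisIndex m) := by
  rcases lt_or_ge (2 * m) n with hn | hn
  · rw [mkAlgHom_word_altWord_of_lt k m hn]
    exact Submodule.zero_mem _
  refine Submodule.subset_span ?_
  by_cases hend : n = 0 ∨ n = 2 * m
  · refine ⟨(n, 0), by simp [basisIndex]; omega, ?_⟩
    rcases hend with rfl | rfl
    · rfl
    · fin_cases s
      exacts [rfl, (mkAlgHom_word_altWord_one k m).symm]
  · exact ⟨(n, s), by simp [basisIndex, hend]; omega, rfl⟩

theorem span_basisElem : Submodule.span k (basisElem k m '' basisIndex m) = ⊤ := by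
  refine eq_top_iff.mpr fun x _ => ?_
  obtain ⟨y, rfl⟩ := RingQuot.mkAlgHom_surjective k (TorusRel k m) x
  suffices ⊤ ≤ (Submodule.span k (basisElem k m '' basisIndex m)).comap
      (RingQuot.mkAlgHom k (TorusRel k m)).toLinearMap from this Submodule.mem_top
  rw [← (basisFreeMonoid k (Fin 2)).span_eq, Submodule.span_le]
  rintro _ ⟨w, rfl⟩
  change RingQuot.mkAlgHom k (TorusRel k m) (word k w.toList) ∈
    Submodule.span k (basisElem k m '' basisIndex m)
  rcases eq_altWord_or_exists_eq_append_cons_cons w.toList with ⟨s, hs⟩ | ⟨u, a, v, huv⟩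
  · rw [hs]
    exact mkAlgHom_word_altWord_mem_span k m _ s
  · rw [huv, mkAlgHom_word_append_cons_cons]
    exact Submodule.zero_mem _

theorem torusTrace_basisElem_mul_dualElem {p q : ℕ × Fin 2} (hp : p ∈ basisIndex m)
    (hq : q ∈ basisIndex m) :
    torusTrace k m (basisElem k m p * dualElem k m q) = if p = q then 1 else 0 := by
  rw [basisElem, dualElem, ← map_mul, ← word_append, torusTrace_mkAlgHom, topCoeff_word]
  exact if_congr (exists_altWord_eq_append_iff hp hq) rfl rfl

end TorusAlgebra

theorem stmt_1_general (k : Type*) [Field k] (m : ℕ) :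
    ∃ l : RingQuot (TorusRel k m) →ₗ[k] k,
      (∀ x y, l (x * y) = l (y * x)) ∧
      (∀ x, (∀ y, l (x * y) = 0) → x = 0) :=
  ⟨TorusAlgebra.torusTrace k m, TorusAlgebra.torusTrace_mul_comm k m, fun _ hx =>
    LinearMap.eq_zero_of_forall_mul_eq_zero_of_dual _ _ _ _ (TorusAlgebra.span_basisElem k m)
      (fun _ hp _ hq => TorusAlgebra.torusTrace_basisElem_mul_dualElem k m hp hq) hx⟩

/-- The torus-loop algebra is a symmetric `k`-algebra: there is a linear functional whose
associated bilinear form `(x, y) ↦ l (x * y)` is symmetric and nondegenerate. -/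
theorem stmt_1 (k : Type*) [Field k] (m : ℕ) (hm : 1 ≤ m) :
    ∃ l : RingQuot (TorusRel k m) →ₗ[k] k,
      (∀ x y, l (x * y) = l (y * x)) ∧
      (∀ x, (∀ y, l (x * y) = 0) → x = 0) :=
  stmt_1_general k m
end

section
/- Let k be a field and A = k⟨a,b⟩/(a², b², (ab)^m − (ba)^m, (ab)^m a, (ba)^m b) with m ≥ 1. Then the Jacobson radical J of A satisfies J^{2m+1} = 0 and J^{2m} ≠ 0; in particular A is a local algebra with residue field k. -/
/-!
Let `ε : A → k` be the augmentation `a, b ↦ 0` and `V = span {a, b}`. Every element of `A` is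
a scalar plus an element of `V * A`, so `ker ε ≤ V * A` and `(ker ε)ⁿ ≤ Vⁿ * A`. Because
`a² = b² = 0`, `V^(2j+1)` is spanned by `(ab)^j a` and `(ba)^j b`, which vanish for `j = m`;
hence `(ker ε)^(2m+1) = 0`. A nil ideal with quotient `k` is the only maximal left ideal, so `A`
is local with `J = ker ε`.

For `J^(2m) ≠ 0` it suffices that `(ab)^m ∈ J^(2m)` is nonzero. The sum of the coefficients of
the alternating words of length `2m` is a functional on `k⟨a,b⟩` with equal values on `u x v` and
`u y v` for every relation `x = y` and all `u, v`: no word `p x q` with `x` one of `a², b²,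
(ab)^m a, (ba)^m b` is alternating of length `2m`, and `p (ab)^m q` is iff `p (ba)^m q` is iff
`p = q = 1`. So it descends to `A`, where it takes the value `1` on `(ab)^m`.
-/

open FreeAlgebra

theorem RingQuot.apply_eq_of_mkRingHom_eq {R M : Type*} [Semiring R] [AddCommMonoid M]
    {r : R → R → Prop} (φ : R →+ M)
    (hφ : ∀ ⦃x y⦄, r x y → ∀ u v, φ (u * x * v) = φ (u * y * v)) {x y : R}
    (h : mkRingHom r x = mkRingHom r y) : φ x = φ y := by
  have hRel : ∀ ⦃x y⦄, Rel r x y → ∀ u v, φ (u * x * v) = φ (u * y * v) := by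
    intro x y hxy
    induction hxy with
    | of h => exact hφ h
    | add_left _ ih => intro u v; simp only [mul_add, add_mul, map_add, ih]
    | mul_left _ ih => intro u v; simpa only [mul_assoc] using ih u (_ * v)
    | mul_right _ ih => intro u v; simpa only [mul_assoc] using ih (u * _) v
  simp only [mkRingHom_def, RingHom.coe_mk, MonoidHom.coe_mk, OneHom.coe_mk, mk.injEq] at h
  have := congrArg (Quot.lift (fun x (uv : R × R) => φ (uv.1 * x * uv.2))
    (fun x y hxy => funext fun uv => hRel hxy uv.1 uv.2)) h
  simpa using congrFun this (1, 1)

theorem MonoidAlgebra.map_mul_mul_eq_of_forall_of {k M N : Type*} [CommSemiring k] [Monoid M]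
    [AddCommMonoid N] [Module k N] (ψ : MonoidAlgebra k M →ₗ[k] N) {X Y : MonoidAlgebra k M}
    (h : ∀ p q, ψ (of k M p * X * of k M q) = ψ (of k M p * Y * of k M q))
    (U V : MonoidAlgebra k M) : ψ (U * X * V) = ψ (U * Y * V) := by
  induction U using MonoidAlgebra.induction_on with
  | of p =>
    induction V using MonoidAlgebra.induction_on with
    | of q => exact h p q
    | add V V' hV hV' => simp only [mul_add, map_add, hV, hV']
    | smul c V hV => simp only [mul_smul_comm, map_smul, hV]
  | add U U' hU hU' => simp only [add_mul, map_add, hU, hU']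
  | smul c U hU => simp only [smul_mul_assoc, map_smul, hU]

theorem FreeAlgebra.equivMonoidAlgebraFreeMonoid_ι {R X : Type*} [CommSemiring R] (x : X) :
    equivMonoidAlgebraFreeMonoid (ι R x) = MonoidAlgebra.of R _ (FreeMonoid.of x) := by
  simp [equivMonoidAlgebraFreeMonoid]

theorem Submodule.pow_le_pow_mul_top {R A : Type*} [CommSemiring R] [Semiring A] [Algebra R A]
    {I V : Submodule R A} (hIV : I ≤ V * ⊤) (hI : ⊤ * I ≤ I) (n : ℕ) :
    I ^ n ≤ V ^ n * ⊤ := by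
  induction n with
  | zero => simp
  | succ n ih =>
    calc I ^ (n + 1) = I ^ n * I := pow_succ _ _
      _ ≤ V ^ n * ⊤ * I := mul_le_mul_left ih _
      _ ≤ V ^ n * I := by rw [mul_assoc]; exact mul_le_mul_right hI _
      _ ≤ V ^ n * (V * ⊤) := mul_le_mul_right hIV _
      _ = V ^ (n + 1) * ⊤ := by rw [pow_succ, mul_assoc]

section Augmentation

variable {k A : Type*} [Field k] [Ring A] [Algebra k A]

theorem AlgHom.isUnit_of_apply_ne_zero (ε : A →ₐ[k] k)
    (hε : ∀ x ∈ RingHom.ker ε, IsNilpotent x) {x : A} (hx : ε x ≠ 0) : IsUnit x := by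
  have hnil : IsNilpotent (x - algebraMap k A (ε x)) := hε _ (by simp)
  have hu : IsUnit (algebraMap k A (ε x)) := (isUnit_iff_ne_zero.2 hx).map _
  simpa using hnil.isUnit_add_left_of_commute hu (Algebra.commutes _ _).symm

theorem AlgHom.isLocalRing_of_ker_nil (ε : A →ₐ[k] k)
    (hε : ∀ x ∈ RingHom.ker ε, IsNilpotent x) : IsLocalRing A := by
  have : Nontrivial A := ε.toRingHom.domain_nontrivial
  refine .of_isUnit_or_isUnit_one_sub_self fun x => ?_
  by_cases hx : ε x = 0
  · exact .inr (ε.isUnit_of_apply_ne_zero hε (by simp [hx]))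
  · exact .inl (ε.isUnit_of_apply_ne_zero hε hx)

theorem AlgHom.jacobson_bot_eq_ker_of_ker_nil (ε : A →ₐ[k] k)
    (hε : ∀ x ∈ RingHom.ker ε, IsNilpotent x) :
    (⊥ : Ideal A).jacobson = RingHom.ker ε := by
  have hmax := RingHom.ker_isMaximal_of_surjective ε fun c => ⟨algebraMap k A c, ε.commutes c⟩
  refine le_antisymm (sInf_le ⟨bot_le, hmax⟩) (le_sInf ?_)
  rintro M ⟨-, hM⟩
  have hle : M ≤ RingHom.ker ε := fun x hx => by_contra fun h =>
    hM.ne_top (Ideal.eq_top_of_isUnit_mem M hx (ε.isUnit_of_apply_ne_zero hε h))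
  exact (hM.eq_of_le hmax.ne_top hle).ge

end Augmentation

namespace FreeMonoid

variable {α : Type*}

def IsAlternating (w : FreeMonoid α) : Prop := w.toList.IsChain (· ≠ ·)

instance [DecidableEq α] : DecidablePred (IsAlternating (α := α)) :=
  fun w => inferInstanceAs (Decidable (w.toList.IsChain (· ≠ ·)))

theorem isAlternating_pow_of_mul_of {i j : α} (hij : i ≠ j) (n : ℕ) :
    ((of i * of j) ^ n).IsAlternating := by
  suffices h : (j :: ((of i * of j) ^ n).toList).IsChain (· ≠ ·) from h.tail
  induction n with
  | zero => exact List.isChain_singleton j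
  | succ n ih =>
    rw [pow_succ', toList_mul, toList_mul, toList_of, toList_of]
    simpa [hij, hij.symm] using ih

theorem length_pow_of_mul_of (i j : α) (n : ℕ) : ((of i * of j) ^ n).length = 2 * n := by
  induction n with
  | zero => rfl
  | succ n ih => rw [pow_succ, length_mul, ih, length_mul, length_of, length_of]; ring

theorem not_isAlternating_mul_of_mul_of_mul (p q : FreeMonoid α) (i : α) :
    ¬ (p * (of i * of i) * q).IsAlternating := fun h => by
  simpa using List.IsChain.infix h ⟨p.toList, q.toList, rfl⟩

theorem length_mul_pow_mul_eq_and_isAlternating_iff {i j : α} (hij : i ≠ j) (n : ℕ)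
    (p q : FreeMonoid α) :
    (p * (of i * of j) ^ n * q).length = 2 * n ∧ (p * (of i * of j) ^ n * q).IsAlternating ↔
      p = 1 ∧ q = 1 := by
  refine ⟨fun ⟨hlen, _⟩ => ?_, ?_⟩
  · simp only [length_mul, length_pow_of_mul_of] at hlen
    exact ⟨length_eq_zero.1 (by omega), length_eq_zero.1 (by omega)⟩
  · rintro ⟨rfl, rfl⟩
    simpa [length_pow_of_mul_of] using isAlternating_pow_of_mul_of hij n

end FreeMonoid

namespace MonoidAlgebra

variable (k : Type*) {α : Type*} [CommSemiring k] [DecidableEq α]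

noncomputable def alternatingCoeff (n : ℕ) : MonoidAlgebra k (FreeMonoid α) →ₗ[k] k :=
  Finsupp.linearCombination k
      (fun w : FreeMonoid α => if w.length = n ∧ w.IsAlternating then 1 else 0) ∘ₗ
    (coeffLinearEquiv k).toLinearMap

variable {k}

theorem alternatingCoeff_single (n : ℕ) (w : FreeMonoid α) (c : k) :
    alternatingCoeff k n (single w c) =
      c * if w.length = n ∧ w.IsAlternating then 1 else 0 := by
  simp [alternatingCoeff]

end MonoidAlgebra

namespace TorusRel

variable (k : Type*) [Field k] (m : ℕ)

noncomputable def gen (i : Fin 2) : RingQuot (TorusRel k m) :=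
  RingQuot.mkAlgHom k (TorusRel k m) (ι k i)

noncomputable def augmentation : RingQuot (TorusRel k m) →ₐ[k] k :=
  RingQuot.liftAlgHom k ⟨FreeAlgebra.lift k 0, by rintro _ _ ⟨⟩ <;> simp⟩

variable {k m}

theorem gen_mul_self (i : Fin 2) : gen k m i * gen k m i = 0 := by
  fin_cases i
  · simpa [gen] using RingQuot.mkAlgHom_rel k (asq (k := k) (m := m))
  · simpa [gen] using RingQuot.mkAlgHom_rel k (bsq (k := k) (m := m))

theorem gen_mul_gen_mul_self (i : Fin 2) (x : RingQuot (TorusRel k m)) :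
    gen k m i * (gen k m i * x) = 0 := by
  rw [← mul_assoc, gen_mul_self, zero_mul]

theorem gen_zero_mul_gen_one_pow_mul_gen_zero : (gen k m 0 * gen k m 1) ^ m * gen k m 0 = 0 := by
  simpa [gen] using RingQuot.mkAlgHom_rel k (soca (k := k) (m := m))

theorem gen_one_mul_gen_zero_pow_mul_gen_one : (gen k m 1 * gen k m 0) ^ m * gen k m 1 = 0 := by
  simpa [gen] using RingQuot.mkAlgHom_rel k (socb (k := k) (m := m))

@[simp]
theorem augmentation_gen (i : Fin 2) : augmentation k m (gen k m i) = 0 := by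
  simp [augmentation, gen]

open Submodule

theorem span_gen_pow_odd_le (j : ℕ) :
    span k {gen k m 0, gen k m 1} ^ (2 * j + 1) ≤
      span k {(gen k m 0 * gen k m 1) ^ j * gen k m 0,
        (gen k m 1 * gen k m 0) ^ j * gen k m 1} := by
  induction j with
  | zero => simp
  | succ j ih =>
    have hsq : span k {gen k m 0, gen k m 1} ^ 2 ≤
        span k {gen k m 0 * gen k m 1, gen k m 1 * gen k m 0} := by
      rw [pow_two, span_mul_span, span_le]
      rintro _ ⟨_, (rfl | rfl), _, (rfl | rfl), rfl⟩ <;>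
        simp only [gen_mul_self, zero_mem, SetLike.mem_coe] <;> exact subset_span (by simp)
    rw [show 2 * (j + 1) + 1 = 2 * j + 1 + 2 by ring, pow_add]
    refine (mul_le_mul' ih hsq).trans ?_
    rw [span_mul_span, span_le]
    rintro _ ⟨_, (rfl | rfl), _, (rfl | rfl), rfl⟩
    · simp [mul_assoc, gen_mul_gen_mul_self]
    · exact subset_span (Or.inl (by simp [pow_succ, mul_assoc]))
    · exact subset_span (Or.inr (by simp [pow_succ, mul_assoc]))
    · simp [mul_assoc, gen_mul_gen_mul_self]

theorem span_gen_pow_eq_bot : span k {gen k m 0, gen k m 1} ^ (2 * m + 1) = ⊥ :=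
  eq_bot_iff.2 <| (span_gen_pow_odd_le m).trans <| by
    simp [gen_zero_mul_gen_one_pow_mul_gen_zero, gen_one_mul_gen_zero_pow_mul_gen_one]

theorem sub_algebraMap_augmentation_mem (x : RingQuot (TorusRel k m)) :
    x - algebraMap k _ (augmentation k m x) ∈ span k {gen k m 0, gen k m 1} * ⊤ := by
  obtain ⟨u, rfl⟩ := RingQuot.mkAlgHom_surjective k _ x
  induction u using FreeAlgebra.induction with
  | grade0 c => simp
  | grade1 i =>
    have hi : gen k m i ∈ span k {gen k m 0, gen k m 1} := subset_span (by fin_cases i <;> simp)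
    change gen k m i - algebraMap k _ (augmentation k m (gen k m i)) ∈ _
    simpa using mul_mem_mul hi (mem_top (x := 1))
  | mul u v hu hv =>
    set x := RingQuot.mkAlgHom k (TorusRel k m) u
    set y := RingQuot.mkAlgHom k (TorusRel k m) v
    have hV : span k {gen k m 0, gen k m 1} * ⊤ * ⊤ ≤ span k {gen k m 0, gen k m 1} * ⊤ :=
      mul_assoc (span k {gen k m 0, gen k m 1}) ⊤ ⊤ ▸ mul_le_mul_right le_top _
    have key : x * y - algebraMap k _ (augmentation k m (x * y)) =
        (x - algebraMap k _ (augmentation k m x)) * y +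
          augmentation k m x • (y - algebraMap k _ (augmentation k m y)) := by
      simp only [map_mul, Algebra.smul_def, sub_mul, mul_sub]
      abel
    rw [map_mul, key]
    exact add_mem (hV (mul_mem_mul hu mem_top)) (smul_mem _ _ hv)
  | add u v hu hv => simpa [add_sub_add_comm] using add_mem hu hv

theorem ker_augmentation_pow_eq_bot :
    (RingHom.ker (augmentation k m)).restrictScalars k ^ (2 * m + 1) = ⊥ := by
  refine eq_bot_iff.2 ((pow_le_pow_mul_top (V := span k {gen k m 0, gen k m 1}) ?_ ?_ _).trans ?_)
  · intro x hx
    simpa [RingHom.mem_ker.1 hx] using sub_algebraMap_augmentation_mem x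
  · exact mul_le.2 fun a _ b hb => Ideal.mul_mem_left _ a hb
  · rw [span_gen_pow_eq_bot, bot_mul]

theorem isNilpotent_of_mem_ker_augmentation {x : RingQuot (TorusRel k m)}
    (hx : x ∈ RingHom.ker (augmentation k m)) : IsNilpotent x :=
  ⟨2 * m + 1, by
    simpa [ker_augmentation_pow_eq_bot] using
      pow_mem_pow ((RingHom.ker (augmentation k m)).restrictScalars k) hx (2 * m + 1)⟩

theorem alternatingCoeff_mul_mul_eq {x y : FreeAlgebra k (Fin 2)} (h : TorusRel k m x y)
    (u v : FreeAlgebra k (Fin 2)) :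
    MonoidAlgebra.alternatingCoeff k (2 * m) (equivMonoidAlgebraFreeMonoid (u * x * v)) =
      MonoidAlgebra.alternatingCoeff k (2 * m) (equivMonoidAlgebraFreeMonoid (u * y * v)) := by
  simp only [map_mul]
  refine MonoidAlgebra.map_mul_mul_eq_of_forall_of _ (fun p q => ?_) _ _
  cases h <;>
    simp only [map_mul, map_pow, map_zero, mul_zero, zero_mul, equivMonoidAlgebraFreeMonoid_ι,
      MonoidAlgebra.of_apply, MonoidAlgebra.single_mul_single, MonoidAlgebra.single_pow, one_mul,
      one_pow, MonoidAlgebra.alternatingCoeff_single]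
  case asq | bsq => exact if_neg fun h => FreeMonoid.not_isAlternating_mul_of_mul_of_mul p q _ h.2
  case comm =>
    refine if_congr ?_ rfl rfl
    rw [FreeMonoid.length_mul_pow_mul_eq_and_isAlternating_iff (by decide),
      FreeMonoid.length_mul_pow_mul_eq_and_isAlternating_iff (by decide)]
  case soca | socb =>
    refine if_neg fun h => ?_
    have hlen := h.1
    simp only [FreeMonoid.length_mul, FreeMonoid.length_pow_of_mul_of, FreeMonoid.length_of] at hlen
    omega

theorem gen_zero_mul_gen_one_pow_ne_zero : (gen k m 0 * gen k m 1) ^ m ≠ 0 := by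
  intro h
  have hmk :
      RingQuot.mkRingHom (TorusRel k m) ((ι k 0 * ι k 1) ^ m) = RingQuot.mkRingHom _ 0 := by
    rw [← RingQuot.mkAlgHom_coe k]
    simp only [AlgHom.coe_toRingHom, map_pow, map_mul, map_zero]
    exact h
  have := RingQuot.apply_eq_of_mkRingHom_eq
    ((MonoidAlgebra.alternatingCoeff k (2 * m)).toAddMonoidHom.comp
      equivMonoidAlgebraFreeMonoid.toAddMonoidHom)
    (fun _ _ hxy u v => alternatingCoeff_mul_mul_eq hxy u v) hmk
  simp [equivMonoidAlgebraFreeMonoid_ι, MonoidAlgebra.of_apply, MonoidAlgebra.single_mul_single,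
    MonoidAlgebra.single_pow, MonoidAlgebra.alternatingCoeff_single,
    FreeMonoid.length_pow_of_mul_of, FreeMonoid.isAlternating_pow_of_mul_of] at this

theorem gen_zero_mul_gen_one_pow_mem_ker_pow :
    (gen k m 0 * gen k m 1) ^ m ∈
      (RingHom.ker (augmentation k m)).restrictScalars k ^ (2 * m) := by
  have hab : gen k m 0 * gen k m 1 ∈ (RingHom.ker (augmentation k m)).restrictScalars k ^ 2 := by
    rw [pow_two]
    exact mul_mem_mul (by simp) (by simp)
  simpa only [pow_mul] using pow_mem_pow _ hab m

end TorusRel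

theorem stmt_8_general (k : Type*) [Field k] (m : ℕ) :
    (Submodule.restrictScalars k
        ((⊥ : Ideal (RingQuot (TorusRel k m))).jacobson)) ^ (2 * m + 1) = ⊥ ∧
    (Submodule.restrictScalars k
        ((⊥ : Ideal (RingQuot (TorusRel k m))).jacobson)) ^ (2 * m) ≠ ⊥ ∧
    IsLocalRing (RingQuot (TorusRel k m)) ∧
    ∀ x : RingQuot (TorusRel k m), ∃ c : k,
      x - algebraMap k _ c ∈ (⊥ : Ideal (RingQuot (TorusRel k m))).jacobson := by
  set ε := TorusRel.augmentation k m
  have hnil : ∀ x ∈ RingHom.ker ε, IsNilpotent x :=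
    fun _ => TorusRel.isNilpotent_of_mem_ker_augmentation
  rw [ε.jacobson_bot_eq_ker_of_ker_nil hnil]
  refine ⟨TorusRel.ker_augmentation_pow_eq_bot, ?_, ε.isLocalRing_of_ker_nil hnil,
    fun x => ⟨ε x, by simp⟩⟩
  exact (Submodule.ne_bot_iff _).2 ⟨_, TorusRel.gen_zero_mul_gen_one_pow_mem_ker_pow,
    TorusRel.gen_zero_mul_gen_one_pow_ne_zero⟩

/-- The torus-loop algebra `A` has Jacobson radical `J` with `J^(2m+1) = 0` and
`J^(2m) ≠ 0`; moreover `A` is local with residue field `k` (every element is congruent to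
a scalar modulo `J`). -/
theorem stmt_8 (k : Type*) [Field k] (m : ℕ) (hm : 1 ≤ m) :
    (Submodule.restrictScalars k
        ((⊥ : Ideal (RingQuot (TorusRel k m))).jacobson)) ^ (2 * m + 1) = ⊥ ∧
    (Submodule.restrictScalars k
        ((⊥ : Ideal (RingQuot (TorusRel k m))).jacobson)) ^ (2 * m) ≠ ⊥ ∧
    IsLocalRing (RingQuot (TorusRel k m)) ∧
    ∀ x : RingQuot (TorusRel k m), ∃ c : k,
      x - algebraMap k _ c ∈ (⊥ : Ideal (RingQuot (TorusRel k m))).jacobson :=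
  stmt_8_general k m
end
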